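/- arXiv:1501.03228 — 4 statements merged into one kernel-verified Lean document; each statement's English description precedes it below -/
import Mathlib

section
/- Let p > 1 and fix 0 ≤ x₀ < x₁ ≤ D. Define f(x) = ν̂(x ∨ x₀, D) for x < x₁ and f(x) = 0 for x ≥ x₁, where ν̂(a,D) = ∫_a^D v^(1-p*). Then for x ∈ (x₀, x₁), the quantity I(f)(x) = (−1/(v f' |f'|^(p-2)))(x) · ∫_0^x f^(p-1) dμ equals ν̂(x₀,D)^(p-1) μ(0,x₀) + ∫_{x₀}^x ν̂(t,D)^(p-1) μ(dt); in particular inf_{x∈(x₀,x₁)} I(f)(x) = ν̂(x₀,D)^(p-1) μ(0,x₀). -/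
/-!
On `(x₀, x₁)` the test function is `f = ν̂(·, D)`, so `f' = -v^(1-p*)` and
`v |f'|^(p-2) f' = -v^(1 + (1-p*)(p-1)) = -1`: the prefactor of the operator is identically `1`.
Splitting `∫₀ˣ f^(p-1) dμ` at `x₀`, where `f` is constant, gives the formula. Its second summand
is nonnegative and tends to `0` as `x ↓ x₀`, which yields the infimum.
-/

open MeasureTheory Set Filter Topology

lemma Real.HolderConjugate.one_sub_conj_mul_sub_one {p q : ℝ} (h : p.HolderConjugate q) :
    (1 - q) * (p - 1) = -1 := by
  linear_combination -h.sub_one_mul_conj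

lemma neg_one_div_mul_neg_rpow_mul_abs_rpow_eq_one {a p q : ℝ} (ha : 0 < a)
    (hpq : (1 - q) * (p - 1) = -1) :
    -(1 / (a * (-(a ^ (1 - q))) * |(-(a ^ (1 - q)))| ^ (p - 2))) = 1 := by
  have hb : 0 < a ^ (1 - q) := Real.rpow_pos_of_pos ha _
  have hp : 1 + (p - 2) ≠ 0 := fun h => by simp [show p - 1 = 0 by linarith] at hpq
  have hprod : a ^ (1 - q) * (a ^ (1 - q)) ^ (p - 2) = a⁻¹ := by
    rw [← Real.rpow_one_add' hb.le hp, ← Real.rpow_mul ha.le,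
      show (1 - q) * (1 + (p - 2)) = -1 by linear_combination hpq, Real.rpow_neg_one]
  rw [abs_neg, abs_of_pos hb, mul_neg, neg_mul, mul_assoc, hprod, mul_inv_cancel₀ ha.ne']
  norm_num

section SetIntegral

variable {g u : ℝ → ℝ} {a b D : ℝ}

lemma setIntegral_Ioo_eq_Ioc_add_Ioo {F : ℝ → ℝ} {c : ℝ} (hab : a ≤ b) (hbc : b < c)
    (h₁ : IntegrableOn F (Ioc a b)) (h₂ : IntegrableOn F (Ioo b c)) :
    ∫ x in Ioo a c, F x = (∫ x in Ioc a b, F x) + ∫ x in Ioo b c, F x := by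
  rw [← Ioc_union_Ioo_eq_Ioo hab hbc, setIntegral_union _ measurableSet_Ioo h₁ h₂]
  exact disjoint_left.mpr fun x hx hx' => hx'.1.not_ge hx.2

lemma continuousOn_setIntegral_Ioo_left (hg : IntegrableOn g (Ioo a D)) :
    ContinuousOn (fun t => ∫ s in Ioo t D, g s) (Icc a D) := by
  rcases le_total a D with haD | hDa
  · have hg' : IntegrableOn g (uIcc a D) := by
      rwa [uIcc_of_le haD, integrableOn_Icc_iff_integrableOn_Ioo]
    refine (uIcc_of_le haD ▸ intervalIntegral.continuousOn_primitive_interval_left hg').congr ?_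
    intro t ht
    dsimp only
    rw [intervalIntegral.integral_of_le ht.2, integral_Ioc_eq_integral_Ioo]
  · exact (subsingleton_Icc_of_ge hDa).continuousOn _

lemma integrableOn_setIntegral_Ioo_rpow_mul {r : ℝ} (hr : 0 ≤ r) (hbD : b ≤ D)
    (hg : IntegrableOn g (Ioo a D)) (hu : IntegrableOn u (Ioo a b)) :
    IntegrableOn (fun t => (∫ s in Ioo t D, g s) ^ r * u t) (Ioo a b) := by
  have hcont : ContinuousOn (fun t => (∫ s in Ioo t D, g s) ^ r) (Icc a b) :=
    ((continuousOn_setIntegral_Ioo_left hg).mono (Icc_subset_Icc_right hbD)).rpow_const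
      fun _ _ => Or.inr hr
  rw [← integrableOn_Icc_iff_integrableOn_Ioo] at hu ⊢
  exact hu.continuousOn_mul hcont isCompact_Icc

lemma isGLB_image_const_add_setIntegral_Ioo {G : ℝ → ℝ} {c : ℝ} (hab : a < b)
    (hG : IntegrableOn G (Ioo a b)) (hG₀ : ∀ t ∈ Ioo a b, 0 ≤ G t) :
    IsGLB ((fun x => c + ∫ t in Ioo a x, G t) '' Ioo a b) c := by
  refine ⟨?_, fun c' hc' => ?_⟩
  · rintro _ ⟨x, hx, rfl⟩
    have : 0 ≤ ∫ t in Ioo a x, G t :=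
      setIntegral_nonneg measurableSet_Ioo fun t ht => hG₀ t ⟨ht.1, ht.2.trans hx.2⟩
    linarith
  have hG' : IntegrableOn G (uIcc a b) := by
    rwa [uIcc_of_le hab.le, integrableOn_Icc_iff_integrableOn_Ioo]
  have hprim : Tendsto (fun x => ∫ t in a..x, G t) (𝓝[Ioo a b] a) (𝓝 0) := by
    have := intervalIntegral.continuousOn_primitive_interval hG' a left_mem_uIcc
    rw [ContinuousWithinAt, intervalIntegral.integral_same, uIcc_of_le hab.le] at this
    exact this.mono_left (nhdsWithin_mono _ Ioo_subset_Icc_self)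
  have hlim : Tendsto (fun x => c + ∫ t in Ioo a x, G t) (𝓝[Ioo a b] a) (𝓝 c) := by
    simpa using tendsto_const_nhds.add (hprim.congr' (eventually_nhdsWithin_of_forall
      fun x hx => by rw [intervalIntegral.integral_of_le hx.1.le, integral_Ioc_eq_integral_Ioo]))
  have : (𝓝[Ioo a b] a).NeBot := by
    rw [nhdsWithin_Ioo_eq_nhdsGT hab]
    infer_instance
  exact ge_of_tendsto hlim (eventually_nhdsWithin_of_forall fun x hx => hc' ⟨x, hx, rfl⟩)

end SetIntegral

lemma setIntegral_rpow_mul_of_eq_ite {f g u : ℝ → ℝ} {r D x₀ x₁ x : ℝ}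
    (hf : ∀ x, f x = if x < x₁ then ∫ s in Ioo (max x x₀) D, g s else 0)
    (hx₀ : 0 ≤ x₀) (hx : x ∈ Ioo x₀ x₁) (hu : IntegrableOn u (Ioc 0 x₀))
    (hG : IntegrableOn (fun t => (∫ s in Ioo t D, g s) ^ r * u t) (Ioo x₀ x)) :
    ∫ t in Ioo 0 x, f t ^ r * u t
      = (∫ s in Ioo x₀ D, g s) ^ r * (∫ t in Ioo 0 x₀, u t)
        + ∫ t in Ioo x₀ x, (∫ s in Ioo t D, g s) ^ r * u t := by
  have hconst : EqOn (fun t => f t ^ r * u t) (fun t => (∫ s in Ioo x₀ D, g s) ^ r * u t)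
      (Ioc 0 x₀) := fun t ht => by
    simp only [hf t, if_pos (ht.2.trans_lt (hx.1.trans hx.2)), max_eq_right ht.2]
  have htail : EqOn (fun t => f t ^ r * u t) (fun t => (∫ s in Ioo t D, g s) ^ r * u t)
      (Ioo x₀ x) := fun t ht => by
    simp only [hf t, if_pos (ht.2.trans hx.2), max_eq_left ht.1.le]
  rw [setIntegral_Ioo_eq_Ioc_add_Ioo hx₀ hx.1
      (IntegrableOn.congr_fun (hu.const_mul _) hconst.symm measurableSet_Ioc)
      (hG.congr_fun htail.symm measurableSet_Ioo),
    setIntegral_congr_fun measurableSet_Ioc hconst, setIntegral_congr_fun measurableSet_Ioo htail,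
    integral_const_mul, integral_Ioc_eq_integral_Ioo]

/-- Test function computation: for `f = ν̂(· ∨ x₀, D) 1_{[0,x₁)}`, on `(x₀,x₁)` the
single-integral operator equals
`ν̂(x₀,D)^(p-1) μ(0,x₀) + ∫_{x₀}^x ν̂(t,D)^(p-1) μ(dt)`, and its infimum over
`(x₀,x₁)` is `ν̂(x₀,D)^(p-1) μ(0,x₀)`. -/
theorem stmt6 (p pstar D x₀ x₁ : ℝ) (hp : 1 < p) (hconj : 1/p + 1/pstar = 1)
    (hx₀ : 0 ≤ x₀) (hx01 : x₀ < x₁) (hx₁D : x₁ ≤ D)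
    (u v : ℝ → ℝ)
    (hu : ∀ x ∈ Ioo (0:ℝ) D, 0 < u x) (hv : ∀ x ∈ Ioo (0:ℝ) D, 0 < v x)
    (huI : IntegrableOn u (Ioo 0 x₁))
    (hvI : IntegrableOn (fun s => v s ^ (1 - pstar)) (Ioo x₀ D))
    (f : ℝ → ℝ)
    (hf : ∀ x, f x = if x < x₁ then ∫ s in Ioo (max x x₀) D, v s ^ (1 - pstar) else 0) :
    (∀ x ∈ Ioo x₀ x₁,
      (-(1 / (v x * (-(v x ^ (1 - pstar))) * |(-(v x ^ (1 - pstar)))| ^ (p - 2)))) *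
          (∫ t in Ioo 0 x, f t ^ (p - 1) * u t)
        = (∫ s in Ioo x₀ D, v s ^ (1 - pstar)) ^ (p - 1) * (∫ t in Ioo 0 x₀, u t)
          + ∫ t in Ioo x₀ x, (∫ s in Ioo t D, v s ^ (1 - pstar)) ^ (p - 1) * u t)
    ∧ IsGLB ((fun x =>
        (-(1 / (v x * (-(v x ^ (1 - pstar))) * |(-(v x ^ (1 - pstar)))| ^ (p - 2)))) *
          (∫ t in Ioo 0 x, f t ^ (p - 1) * u t)) '' Ioo x₀ x₁)
      ((∫ s in Ioo x₀ D, v s ^ (1 - pstar)) ^ (p - 1) * (∫ t in Ioo 0 x₀, u t)) := by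
  have hpq : (1 - pstar) * (p - 1) = -1 :=
    (Real.holderConjugate_iff.2 ⟨hp, by simpa using hconj⟩).one_sub_conj_mul_sub_one
  have hmem : ∀ {t}, t ∈ Ioo x₀ x₁ → t ∈ Ioo 0 D := fun ht =>
    ⟨hx₀.trans_lt ht.1, ht.2.trans_le hx₁D⟩
  have hG := integrableOn_setIntegral_Ioo_rpow_mul (sub_nonneg.2 hp.le) hx₁D hvI
    (huI.mono_set (Ioo_subset_Ioo_left hx₀))
  have hG₀ : ∀ t ∈ Ioo x₀ x₁, 0 ≤ (∫ s in Ioo t D, v s ^ (1 - pstar)) ^ (p - 1) * u t :=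
    fun t ht => mul_nonneg (Real.rpow_nonneg (setIntegral_nonneg measurableSet_Ioo fun s hs =>
      (Real.rpow_pos_of_pos (hv s ⟨(hmem ht).1.trans hs.1, hs.2⟩) _).le) _) (hu t (hmem ht)).le
  have hI : ∀ x ∈ Ioo x₀ x₁,
      (-(1 / (v x * (-(v x ^ (1 - pstar))) * |(-(v x ^ (1 - pstar)))| ^ (p - 2)))) *
          (∫ t in Ioo 0 x, f t ^ (p - 1) * u t)
        = (∫ s in Ioo x₀ D, v s ^ (1 - pstar)) ^ (p - 1) * (∫ t in Ioo 0 x₀, u t)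
          + ∫ t in Ioo x₀ x, (∫ s in Ioo t D, v s ^ (1 - pstar)) ^ (p - 1) * u t := by
    intro x hx
    rw [neg_one_div_mul_neg_rpow_mul_abs_rpow_eq_one (hv x (hmem hx)) hpq, one_mul]
    exact setIntegral_rpow_mul_of_eq_ite hf hx₀ hx
      (huI.mono_set (Ioc_subset_Ioo_right hx01)) (hG.mono_set (Ioo_subset_Ioo_right hx.2.le))
  exact ⟨hI, image_congr hI ▸ isGLB_image_const_add_setIntegral_Ioo hx01 hG hG₀⟩
end

section
/- Let p > 1 and suppose ν̂(t,x) = ∫_t^x v̂ < ∞ for x₀ ≤ t ≤ x < y ≤ D. Then for all t ∈ [x₀, x], (ν̂(t,y)/ν̂(t,x))^p ≥ ν̂(x₀,y)/ν̂(x₀,x). Consequently, the function x₁ ↦ μ(0,x₀) ν̂(x₀,x₁)^(p-1) + (1/ν̂(x₀,x₁)) ∫_{x₀}^{x₁} ν̂(s,x₁)^p μ(ds) is increasing in x₁ ∈ (x₀, D). -/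
/-!
Write `ν(a, b) = ∫_a^b w` and split `ν(x₀, y) = a + b + c` with `a = ν(x₀, t)`, `b = ν(t, x)`,
`c = ν(x, y)`. Then `(a + b + c) / (a + b) ≤ (b + c) / b`, and `(b + c) / b ≥ 1` only grows
when raised to the power `p ≥ 1`. Taking `t = s` and cross-multiplying gives
`ν(x₀, y) ν(s, x)^p ≤ ν(x₀, x) ν(s, y)^p`; integrating against `u ≥ 0` over `(x₀, x)`, and then
enlarging the domain to `(x₀, y)`, shows that `ν(x₀, x)⁻¹ ∫_{x₀}^{x} ν(s, x)^p u(s) ds` is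
monotone, while the first summand is monotone because `p - 1 ≥ 0`.
-/

open MeasureTheory Set

lemma add_div_add_le_div_rpow {a b c p : ℝ} (ha : 0 ≤ a) (hb : 0 < b) (hc : 0 ≤ c)
    (hp : 1 ≤ p) : (a + (b + c)) / (a + b) ≤ ((b + c) / b) ^ p := by
  have hab : 0 < a + b := by positivity
  calc (a + (b + c)) / (a + b) = 1 + c / (a + b) := by field_simp; ring
    _ ≤ 1 + c / b := by gcongr; linarith
    _ = (b + c) / b := by field_simp
    _ ≤ ((b + c) / b) ^ p :=
      Real.self_le_rpow_of_one_le ((one_le_div hb).2 (by linarith)) hp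

section IooIntegral

variable {f : ℝ → ℝ} {a b c : ℝ}

lemma setIntegral_Ioo_eq_intervalIntegral (hab : a ≤ b) :
    ∫ s in Ioo a b, f s = ∫ s in a..b, f s := by
  rw [intervalIntegral.integral_of_le hab, integral_Ioc_eq_integral_Ioo]

lemma setIntegral_Ioo_add_Ioo (hab : a ≤ b) (hbc : b ≤ c) (hf : IntegrableOn f (Ioo a c)) :
    (∫ s in Ioo a b, f s) + ∫ s in Ioo b c, f s = ∫ s in Ioo a c, f s := by
  have hfab : IntervalIntegrable f volume a b :=
    (intervalIntegrable_iff_integrableOn_Ioo_of_le hab).2 (hf.mono_set (Ioo_subset_Ioo_right hbc))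
  have hfbc : IntervalIntegrable f volume b c :=
    (intervalIntegrable_iff_integrableOn_Ioo_of_le hbc).2 (hf.mono_set (Ioo_subset_Ioo_left hab))
  rw [setIntegral_Ioo_eq_intervalIntegral hab, setIntegral_Ioo_eq_intervalIntegral hbc,
    setIntegral_Ioo_eq_intervalIntegral (hab.trans hbc)]
  exact intervalIntegral.integral_add_adjacent_intervals hfab hfbc

lemma setIntegral_Ioo_nonneg (hf : ∀ s ∈ Ioo a b, 0 ≤ f s) : 0 ≤ ∫ s in Ioo a b, f s :=
  setIntegral_nonneg measurableSet_Ioo hf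

lemma setIntegral_Ioo_pos (hab : a < b) (hf : IntegrableOn f (Ioo a b))
    (hpos : ∀ s ∈ Ioo a b, 0 < f s) : 0 < ∫ s in Ioo a b, f s := by
  rw [setIntegral_Ioo_eq_intervalIntegral hab.le]
  exact intervalIntegral.intervalIntegral_pos_of_pos_on
    ((intervalIntegrable_iff_integrableOn_Ioo_of_le hab.le).2 hf) hpos hab

lemma setIntegral_Ioo_mono_right (hbc : b ≤ c) (hf : IntegrableOn f (Ioo a c))
    (hnn : ∀ s ∈ Ioo a c, 0 ≤ f s) : ∫ s in Ioo a b, f s ≤ ∫ s in Ioo a c, f s :=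
  setIntegral_mono_set hf (ae_restrict_of_forall_mem measurableSet_Ioo hnn)
    (Ioo_subset_Ioo_right hbc).eventuallyLE

/-- `s ↦ (∫_s^b f)^p` is continuous, hence bounded, on the compact `[a, b]`. -/
lemma integrableOn_rpow_setIntegral_Ioo_mul {u : ℝ → ℝ} {p : ℝ} (hp : 0 ≤ p) (hab : a ≤ b)
    (hf : IntegrableOn f (Ioo a b)) (hu : IntegrableOn u (Ioo a b)) :
    IntegrableOn (fun s => (∫ z in Ioo s b, f z) ^ p * u s) (Ioo a b) := by
  have hcont : ContinuousOn (fun s => (∫ z in s..b, f z) ^ p) (Icc a b) := by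
    refine (Real.continuous_rpow_const hp).comp_continuousOn ?_
    rw [← uIcc_of_le hab]
    refine intervalIntegral.continuousOn_primitive_interval_left ?_
    rwa [uIcc_of_le hab, integrableOn_Icc_iff_integrableOn_Ioo]
  refine (hu.continuousOn_mul_of_subset hcont isCompact_Icc measurableSet_Ioo
    Ioo_subset_Icc_self).congr_fun (fun s hs => ?_) measurableSet_Ioo
  rw [setIntegral_Ioo_eq_intervalIntegral hs.2.le]

end IooIntegral

section Weight

variable {w u : ℝ → ℝ} {p x₀ x y : ℝ}

lemma setIntegral_Ioo_div_le_div_rpow {t : ℝ} (hp : 1 ≤ p) (ht₀ : x₀ ≤ t) (htx : t < x)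
    (hxy : x ≤ y) (hwI : IntegrableOn w (Ioo x₀ y)) (hw : ∀ s ∈ Ioo x₀ y, 0 < w s) :
    (∫ s in Ioo x₀ y, w s) / (∫ s in Ioo x₀ x, w s)
      ≤ ((∫ s in Ioo t y, w s) / (∫ s in Ioo t x, w s)) ^ p := by
  have hty : t ≤ y := htx.le.trans hxy
  have hwI' : IntegrableOn w (Ioo t y) := hwI.mono_set (Ioo_subset_Ioo_left ht₀)
  rw [← setIntegral_Ioo_add_Ioo ht₀ htx.le (hwI.mono_set (Ioo_subset_Ioo_right hxy)),
    ← setIntegral_Ioo_add_Ioo ht₀ hty hwI, ← setIntegral_Ioo_add_Ioo htx.le hxy hwI']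
  refine add_div_add_le_div_rpow ?_ ?_ ?_ hp
  · exact setIntegral_Ioo_nonneg fun s hs => (hw s ⟨hs.1, hs.2.trans_le hty⟩).le
  · exact setIntegral_Ioo_pos htx (hwI'.mono_set (Ioo_subset_Ioo_right hxy))
      fun s hs => hw s ⟨ht₀.trans_lt hs.1, hs.2.trans_le hxy⟩
  · exact setIntegral_Ioo_nonneg fun s hs => (hw s ⟨ht₀.trans_lt (htx.trans hs.1), hs.2⟩).le

lemma setIntegral_Ioo_mul_rpow_le (hp : 1 ≤ p) {s : ℝ} (hs : s ∈ Ioo x₀ x) (hxy : x ≤ y)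
    (hwI : IntegrableOn w (Ioo x₀ y)) (hw : ∀ s ∈ Ioo x₀ y, 0 < w s) :
    (∫ z in Ioo x₀ y, w z) * (∫ z in Ioo s x, w z) ^ p
      ≤ (∫ z in Ioo x₀ x, w z) * (∫ z in Ioo s y, w z) ^ p := by
  have hpos : ∀ {a b}, x₀ ≤ a → a < b → b ≤ y → 0 < ∫ z in Ioo a b, w z := fun ha hab hb =>
    setIntegral_Ioo_pos hab (hwI.mono_set (Ioo_subset_Ioo ha hb))
      fun z hz => hw z ⟨ha.trans_lt hz.1, hz.2.trans_le hb⟩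
  have h := setIntegral_Ioo_div_le_div_rpow hp hs.1.le hs.2 hxy hwI hw
  rw [Real.div_rpow (hpos hs.1.le (hs.2.trans_le hxy) le_rfl).le (hpos hs.1.le hs.2 hxy).le,
    div_le_div_iff₀ (hpos le_rfl (hs.1.trans hs.2) hxy)
      (Real.rpow_pos_of_pos (hpos hs.1.le hs.2 hxy) p)] at h
  linarith

lemma inv_setIntegral_Ioo_mul_rpow_mono (hp : 1 ≤ p) (hx : x₀ < x) (hxy : x ≤ y)
    (hwI : IntegrableOn w (Ioo x₀ y)) (hw : ∀ s ∈ Ioo x₀ y, 0 < w s)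
    (huI : IntegrableOn u (Ioo x₀ y)) (hu : ∀ s ∈ Ioo x₀ y, 0 ≤ u s) :
    (∫ s in Ioo x₀ x, w s)⁻¹ * ∫ s in Ioo x₀ x, (∫ z in Ioo s x, w z) ^ p * u s
      ≤ (∫ s in Ioo x₀ y, w s)⁻¹ * ∫ s in Ioo x₀ y, (∫ z in Ioo s y, w z) ^ p * u s := by
  set νx := ∫ s in Ioo x₀ x, w s
  set νy := ∫ s in Ioo x₀ y, w s
  have hνx : 0 < νx := setIntegral_Ioo_pos hx (hwI.mono_set (Ioo_subset_Ioo_right hxy))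
    fun s hs => hw s ⟨hs.1, hs.2.trans_le hxy⟩
  have hνy : 0 < νy := setIntegral_Ioo_pos (hx.trans_le hxy) hwI hw
  have hIy := integrableOn_rpow_setIntegral_Ioo_mul (p := p) (by linarith)
    (hx.trans_le hxy).le hwI huI
  have hIx := integrableOn_rpow_setIntegral_Ioo_mul (p := p) (by linarith) hx.le
    (hwI.mono_set (Ioo_subset_Ioo_right hxy)) (huI.mono_set (Ioo_subset_Ioo_right hxy))
  have hcross : νy * ∫ s in Ioo x₀ x, (∫ z in Ioo s x, w z) ^ p * u s
      ≤ νx * ∫ s in Ioo x₀ y, (∫ z in Ioo s y, w z) ^ p * u s := by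
    rw [← integral_const_mul, ← integral_const_mul]
    calc ∫ s in Ioo x₀ x, νy * ((∫ z in Ioo s x, w z) ^ p * u s)
        ≤ ∫ s in Ioo x₀ x, νx * ((∫ z in Ioo s y, w z) ^ p * u s) := by
          refine setIntegral_mono_on (hIx.const_mul _)
            ((hIy.mono_set (Ioo_subset_Ioo_right hxy)).const_mul _) measurableSet_Ioo
            fun s hs => ?_
          rw [← mul_assoc, ← mul_assoc]
          exact mul_le_mul_of_nonneg_right (setIntegral_Ioo_mul_rpow_le hp hs hxy hwI hw)
            (hu s ⟨hs.1, hs.2.trans_le hxy⟩)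
      _ ≤ ∫ s in Ioo x₀ y, νx * ((∫ z in Ioo s y, w z) ^ p * u s) :=
          setIntegral_Ioo_mono_right hxy (hIy.const_mul _) fun s hs =>
            mul_nonneg hνx.le (mul_nonneg (Real.rpow_nonneg
              (setIntegral_Ioo_nonneg fun z hz => (hw z ⟨hs.1.trans hz.1, hz.2⟩).le) p)
              (hu s hs))
  rw [inv_mul_eq_div, inv_mul_eq_div, div_le_div_iff₀ hνx hνy]
  linarith

end Weight

theorem stmt7_general (p D x₀ : ℝ) (hp : 1 < p) (hx₀ : x₀ ∈ Ioo (0:ℝ) D)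
    (u w : ℝ → ℝ)
    (hu : ∀ s ∈ Ioo (0:ℝ) D, 0 ≤ u s) (hw : ∀ s ∈ Ioo (0:ℝ) D, 0 < w s)
    (hwI : ∀ a b : ℝ, 0 < a → b ≤ D → IntegrableOn w (Ioo a b))
    (huI : ∀ b : ℝ, b ≤ D → IntegrableOn u (Ioo 0 b)) :
    (∀ x y : ℝ, x₀ ≤ x → x < y → y ≤ D → ∀ t ∈ Ico x₀ x,
      (∫ s in Ioo x₀ y, w s) / (∫ s in Ioo x₀ x, w s)
        ≤ ((∫ s in Ioo t y, w s) / (∫ s in Ioo t x, w s)) ^ p)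
    ∧ MonotoneOn (fun x₁ =>
        (∫ t in Ioo 0 x₀, u t) * (∫ s in Ioo x₀ x₁, w s) ^ (p - 1)
          + (∫ s in Ioo x₀ x₁, w s)⁻¹ *
            ∫ s in Ioo x₀ x₁, (∫ z in Ioo s x₁, w z) ^ p * u s)
      (Ioo x₀ D) := by
  obtain ⟨hx₀0, hx₀D⟩ := hx₀
  have hwy : ∀ {y}, y ≤ D → ∀ s ∈ Ioo x₀ y, 0 < w s :=
    fun hy s hs => hw s ⟨hx₀0.trans hs.1, hs.2.trans_le hy⟩
  refine ⟨fun x y _ hxy hy t ⟨ht₀, htx⟩ =>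
    setIntegral_Ioo_div_le_div_rpow hp.le ht₀ htx hxy.le (hwI x₀ y hx₀0 hy) (hwy hy),
    fun x hx y hy hxy => add_le_add ?_ ?_⟩
  · have hA : 0 ≤ ∫ t in Ioo 0 x₀, u t :=
      setIntegral_Ioo_nonneg fun s hs => hu s ⟨hs.1, hs.2.trans hx₀D⟩
    refine mul_le_mul_of_nonneg_left (Real.rpow_le_rpow ?_ ?_ (by linarith)) hA
    · exact setIntegral_Ioo_nonneg fun s hs => (hwy hx.2.le s hs).le
    · exact setIntegral_Ioo_mono_right hxy (hwI x₀ y hx₀0 hy.2.le) fun s hs => (hwy hy.2.le s hs).le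
  · exact inv_setIntegral_Ioo_mul_rpow_mono hp.le hx.1 hxy (hwI x₀ y hx₀0 hy.2.le) (hwy hy.2.le)
      ((huI y hy.2.le).mono_set (Ioo_subset_Ioo_left hx₀0.le))
      fun s hs => hu s ⟨hx₀0.trans hs.1, hs.2.trans hy.2⟩

/-- Monotonicity lemma: `(ν̂(t,y)/ν̂(t,x))^p ≥ ν̂(x₀,y)/ν̂(x₀,x)` for `t ∈ [x₀,x)`,
and consequently `x₁ ↦ μ(0,x₀) ν̂(x₀,x₁)^(p-1) + ν̂(x₀,x₁)⁻¹ ∫_{x₀}^{x₁} ν̂(s,x₁)^p μ(ds)`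
is increasing on `(x₀, D)`. -/
theorem stmt7 (p D x₀ : ℝ) (hp : 1 < p) (hD : 0 < D) (hx₀ : x₀ ∈ Ioo (0:ℝ) D)
    (u w : ℝ → ℝ)
    (hu : ∀ s ∈ Ioo (0:ℝ) D, 0 ≤ u s) (hw : ∀ s ∈ Ioo (0:ℝ) D, 0 < w s)
    (hwI : ∀ a b : ℝ, 0 < a → b ≤ D → IntegrableOn w (Ioo a b))
    (huI : ∀ b : ℝ, b ≤ D → IntegrableOn u (Ioo 0 b)) :
    (∀ x y : ℝ, x₀ ≤ x → x < y → y ≤ D → ∀ t ∈ Ico x₀ x,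
      (∫ s in Ioo x₀ y, w s) / (∫ s in Ioo x₀ x, w s)
        ≤ ((∫ s in Ioo t y, w s) / (∫ s in Ioo t x, w s)) ^ p)
    ∧ MonotoneOn (fun x₁ =>
        (∫ t in Ioo 0 x₀, u t) * (∫ s in Ioo x₀ x₁, w s) ^ (p - 1)
          + (∫ s in Ioo x₀ x₁, w s)⁻¹ *
            ∫ s in Ioo x₀ x₁, (∫ z in Ioo s x₁, w z) ^ p * u s)
      (Ioo x₀ D) :=
  stmt7_general p D x₀ hp hx₀ u w hu hw hwI huI
end

section
/- Let p > 1, let f ∈ C[0,D] with f > 0 on (0,D), f' < 0 on (0,D), v^(p*-1) f' continuous on (0,D), and f(D) ≥ 0. Then for every x ∈ (0,D), II(f)(x) ≤ sup_{y∈(0,D)} I(f)(y), where I(f)(x) = −(v f'|f'|^(p-2))(x)^{-1} ∫_0^x f^(p-1) dμ and II(f)(x) = f(x)^(1-p) [ ∫_x^D v̂(s) (∫_0^s f^(p-1) dμ)^(p*-1) ds ]^(p-1). -/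
/-!
Write `F(s) = ∫_0^s f^(p-1) dμ`. The bound `I(f)(s) ≤ K` reads `F(s) ≤ K v(s) |f'(s)|^(p-1)`, and
raising it to the power `p* - 1 = 1/(p-1)` gives `v̂(s) F(s)^(p*-1) ≤ K^(p*-1) (-f'(s))`. Integrating
over `(x, D)` bounds the inner integral of `II(f)(x)` by `K^(p*-1) (f(x) - f(D)) ≤ K^(p*-1) f(x)`,
and raising to the power `p - 1` gives `II(f)(x) ≤ K`.
-/

open MeasureTheory Set

namespace Real.HolderConjugate

lemma sub_one_mul_sub_one {p q : ℝ} (h : p.HolderConjugate q) : (p - 1) * (q - 1) = 1 := by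
  linear_combination h.mul_eq_add

end Real.HolderConjugate

lemma neg_one_div_mul_mul_abs_rpow_of_neg {a : ℝ} (v p : ℝ) (ha : a < 0) :
    -(1 / (v * a * |a| ^ (p - 2))) = (v * |a| ^ (p - 1))⁻¹ := by
  have hpow : |a| ^ (p - 1) = |a| ^ (p - 2) * |a| := by
    rw [← Real.rpow_add_one (abs_pos.2 ha.ne).ne']
    ring_nf
  rw [hpow, abs_of_neg ha]
  field_simp

lemma rpow_one_sub_mul_rpow_sub_one_le_mul_neg {p q K v a F : ℝ} (hpq : p.HolderConjugate q)
    (hK : 0 ≤ K) (hv : 0 < v) (ha : a < 0) (hF : 0 ≤ F)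
    (h : -(1 / (v * a * |a| ^ (p - 2))) * F ≤ K) :
    v ^ (1 - q) * F ^ (q - 1) ≤ K ^ (q - 1) * -a := by
  have hc : 0 < |a| ^ (p - 1) := Real.rpow_pos_of_pos (abs_pos.2 ha.ne) _
  have hF' : F ≤ K * (v * |a| ^ (p - 1)) := by
    rwa [neg_one_div_mul_mul_abs_rpow_of_neg v p ha, inv_mul_eq_div,
      div_le_iff₀ (mul_pos hv hc)] at h
  have hq := hpq.symm.sub_one_pos
  calc v ^ (1 - q) * F ^ (q - 1) ≤ v ^ (1 - q) * (K * (v * |a| ^ (p - 1))) ^ (q - 1) := by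
        gcongr
    _ = (v ^ (1 - q) * v ^ (q - 1)) * K ^ (q - 1) * |a| := by
        rw [Real.mul_rpow hK (mul_pos hv hc).le, Real.mul_rpow hv.le hc.le,
          ← Real.rpow_mul (abs_nonneg a), hpq.sub_one_mul_sub_one, Real.rpow_one]
        ring
    _ = K ^ (q - 1) * -a := by
        rw [← Real.rpow_add hv, abs_of_neg ha]
        norm_num

lemma setIntegral_Ioo_le_sub_of_hasDerivAt {φ g g' : ℝ → ℝ} {a b : ℝ} (hab : a ≤ b)
    (hg : ContinuousOn g (Icc a b)) (hderiv : ∀ x ∈ Ioo a b, HasDerivAt g (g' x) x)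
    (hφ : ∀ x ∈ Ioo a b, 0 ≤ φ x) (hφg : ∀ x ∈ Ioo a b, φ x ≤ g' x) :
    ∫ x in Ioo a b, φ x ≤ g b - g a := by
  by_cases hint : IntegrableOn φ (Ioo a b)
  · have h := intervalIntegral.integral_le_sub_of_hasDeriv_right_of_le hab hg
      (fun x hx => (hderiv x hx).hasDerivWithinAt)
      (by rwa [integrableOn_Icc_iff_integrableOn_Ioo]) hφg
    rwa [intervalIntegral.integral_of_le hab, integral_Ioc_eq_integral_Ioo] at h
  · have hmono : MonotoneOn g (Icc a b) := by
      refine monotoneOn_of_hasDerivWithinAt_nonneg (convex_Icc a b) hg (f' := g') ?_ ?_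
      · rw [interior_Icc]
        exact fun x hx => (hderiv x hx).hasDerivWithinAt
      · rw [interior_Icc]
        exact fun x hx => (hφ x hx).trans (hφg x hx)
    rw [integral_undef hint, sub_nonneg]
    exact hmono (left_mem_Icc.2 hab) (right_mem_Icc.2 hab) hab

lemma rpow_one_sub_mul_rpow_sub_one_le {p q K y I : ℝ} (hpq : p.HolderConjugate q)
    (hK : 0 ≤ K) (hy : 0 < y) (hI : 0 ≤ I) (h : I ≤ K ^ (q - 1) * y) :
    y ^ (1 - p) * I ^ (p - 1) ≤ K := by
  have hp := hpq.sub_one_pos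
  calc y ^ (1 - p) * I ^ (p - 1) ≤ y ^ (1 - p) * (K ^ (q - 1) * y) ^ (p - 1) := by gcongr
    _ = (y ^ (1 - p) * y ^ (p - 1)) * K := by
        rw [Real.mul_rpow (Real.rpow_nonneg hK _) hy.le, ← Real.rpow_mul hK,
          mul_comm (q - 1), hpq.sub_one_mul_sub_one, Real.rpow_one]
        ring
    _ = K := by
        rw [← Real.rpow_add hy]
        norm_num

theorem stmt10_general (p pstar D : ℝ) (hp : 1 < p) (hconj : 1/p + 1/pstar = 1)
    (u v : ℝ → ℝ)
    (hu : ∀ x ∈ Ioo (0:ℝ) D, 0 < u x) (hv : ∀ x ∈ Ioo (0:ℝ) D, 0 < v x)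
    (f f' : ℝ → ℝ)
    (hf : ContinuousOn f (Icc 0 D))
    (hfpos : ∀ x ∈ Ioo (0:ℝ) D, 0 < f x)
    (hfd : ∀ x ∈ Ioo (0:ℝ) D, HasDerivAt f (f' x) x)
    (hf'neg : ∀ x ∈ Ioo (0:ℝ) D, f' x < 0)
    (hfD : 0 ≤ f D)
    (K : ℝ)
    (hK : ∀ y ∈ Ioo (0:ℝ) D,
      -(1 / (v y * f' y * |f' y| ^ (p - 2))) * (∫ t in Ioo 0 y, f t ^ (p - 1) * u t) ≤ K) :
    ∀ x ∈ Ioo (0:ℝ) D,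
      f x ^ (1 - p) *
        (∫ s in Ioo x D, v s ^ (1 - pstar) *
          (∫ t in Ioo 0 s, f t ^ (p - 1) * u t) ^ (pstar - 1)) ^ (p - 1) ≤ K := by
  intro x hx
  have hpq : p.HolderConjugate pstar :=
    Real.holderConjugate_iff.2 ⟨hp, by simpa only [one_div] using hconj⟩
  have hsub : ∀ s ∈ Ioo x D, s ∈ Ioo (0:ℝ) D := fun s hs => ⟨hx.1.trans hs.1, hs.2⟩
  have hF : ∀ s ∈ Ioo (0:ℝ) D, 0 ≤ ∫ t in Ioo 0 s, f t ^ (p - 1) * u t := fun s hs =>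
    setIntegral_nonneg measurableSet_Ioo fun t ht =>
      have ht' : t ∈ Ioo (0:ℝ) D := ⟨ht.1, ht.2.trans hs.2⟩
      mul_nonneg (Real.rpow_nonneg (hfpos t ht').le _) (hu t ht').le
  have hK0 : 0 ≤ K := by
    refine le_trans (mul_nonneg ?_ (hF x hx)) (hK x hx)
    rw [neg_one_div_mul_mul_abs_rpow_of_neg _ _ (hf'neg x hx)]
    exact inv_nonneg.2 (mul_nonneg (hv x hx).le (Real.rpow_nonneg (abs_nonneg _) _))
  have hφ : ∀ s ∈ Ioo x D,
      0 ≤ v s ^ (1 - pstar) * (∫ t in Ioo 0 s, f t ^ (p - 1) * u t) ^ (pstar - 1) :=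
    fun s hs => mul_nonneg (Real.rpow_nonneg (hv s (hsub s hs)).le _)
      (Real.rpow_nonneg (hF s (hsub s hs)) _)
  set C := K ^ (pstar - 1)
  have hint := setIntegral_Ioo_le_sub_of_hasDerivAt (g := fun t => -(C * f t)) hx.2.le
    (continuousOn_const.mul (hf.mono (Icc_subset_Icc hx.1.le le_rfl))).neg
    (fun s hs => ((hfd s (hsub s hs)).const_mul C).neg) hφ
    (fun s hs => (rpow_one_sub_mul_rpow_sub_one_le_mul_neg hpq hK0 (hv s (hsub s hs))
      (hf'neg s (hsub s hs)) (hF s (hsub s hs)) (hK s (hsub s hs))).trans_eq (by ring))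
  refine rpow_one_sub_mul_rpow_sub_one_le hpq hK0 (hfpos x hx)
    (setIntegral_nonneg measurableSet_Ioo hφ) (hint.trans ?_)
  linarith [mul_nonneg (Real.rpow_nonneg hK0 (pstar - 1)) hfD]

/-- For decreasing positive `f` with `f(D) ≥ 0`, the double-integral operator is
dominated by the supremum of the single-integral operator: `II(f)(x) ≤ sup_y I(f)(y)`. -/
theorem stmt10 (p pstar D : ℝ) (hp : 1 < p) (hconj : 1/p + 1/pstar = 1) (hD : 0 < D)
    (u v : ℝ → ℝ)
    (hu : ∀ x ∈ Ioo (0:ℝ) D, 0 < u x) (hv : ∀ x ∈ Ioo (0:ℝ) D, 0 < v x)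
    (huI : ∀ x ∈ Ioo (0:ℝ) D, IntegrableOn u (Ioo 0 x))
    (f f' : ℝ → ℝ)
    (hf : ContinuousOn f (Icc 0 D))
    (hfpos : ∀ x ∈ Ioo (0:ℝ) D, 0 < f x)
    (hfd : ∀ x ∈ Ioo (0:ℝ) D, HasDerivAt f (f' x) x)
    (hf'neg : ∀ x ∈ Ioo (0:ℝ) D, f' x < 0)
    (hfc : ContinuousOn (fun x => v x ^ (pstar - 1) * f' x) (Ioo 0 D))
    (hfD : 0 ≤ f D)
    (K : ℝ)
    (hK : ∀ y ∈ Ioo (0:ℝ) D,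
      -(1 / (v y * f' y * |f' y| ^ (p - 2))) * (∫ t in Ioo 0 y, f t ^ (p - 1) * u t) ≤ K) :
    ∀ x ∈ Ioo (0:ℝ) D,
      f x ^ (1 - p) *
        (∫ s in Ioo x D, v s ^ (1 - pstar) *
          (∫ t in Ioo 0 s, f t ^ (p - 1) * u t) ^ (pstar - 1)) ^ (p - 1) ≤ K :=
  stmt10_general p pstar D hp hconj u v hu hv f f' hf hfpos hfd hf'neg hfD K hK
end

section
/- Example (uniform weights, improved lower bound): for u = v = 1 on (0,1), the quantity δ̄₁ = sup_{x∈(0,1)} [ x(1−x)^(p-1) + (1−x)^{-1} ∫_x^1 (1−t)^p dt ] satisfies δ̄₁^(1/p) = p^(1/p − 2) (p² − 1)^(1 − 1/p). -/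
open MeasureTheory Set

/-!
After computing the integral, the quantity to maximise is `y ^ (p - 1) * (1 - p / (p + 1) * y)`
with `y = 1 - x`. A function `y ^ (q - 1) * (1 - c * y)` is maximised at `y = (q - 1) / (c * q)`:
rescaling reduces this to `c = (q - 1) / q`, where the bound
`s ^ (q - 1) ≤ (q - 1) / q * s ^ q + 1 / q` is weighted AM-GM for `s ^ q` and `1`.
-/

namespace Real

lemma rpow_sub_one_mul_one_sub_le {q s : ℝ} (hq : 1 ≤ q) (hs : 0 ≤ s) :
    s ^ (q - 1) * (1 - (q - 1) / q * s) ≤ 1 / q := by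
  have hq0 : 0 < q := by linarith
  have amgm : (s ^ q) ^ ((q - 1) / q) * 1 ^ (1 / q) ≤ (q - 1) / q * s ^ q + 1 / q * 1 :=
    geom_mean_le_arith_mean2_weighted (div_nonneg (by linarith) hq0.le) (by positivity)
      (by positivity) zero_le_one (by field_simp; ring)
  have hpow : (s ^ q) ^ ((q - 1) / q) = s ^ (q - 1) := by
    rw [← rpow_mul hs, mul_div_cancel₀ _ hq0.ne']
  have hsplit : s ^ q = s ^ (q - 1) * s := by
    conv_lhs => rw [← sub_add_cancel q 1]
    rw [rpow_add' hs (by linarith), rpow_one]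
  rw [hpow, one_rpow, hsplit] at amgm
  linarith

lemma rpow_sub_one_mul_one_sub_mul_le {q c y : ℝ} (hq : 1 < q) (hc : 0 < c) (hy : 0 ≤ y) :
    y ^ (q - 1) * (1 - c * y) ≤ ((q - 1) / (c * q)) ^ (q - 1) / q := by
  set m := (q - 1) / (c * q)
  have hm : 0 < m := div_pos (by linarith) (by positivity)
  have hcm : c * m = (q - 1) / q := by simp only [m]; field_simp
  obtain ⟨s, hs, rfl⟩ : ∃ s, 0 ≤ s ∧ y = m * s :=
    ⟨y / m, by positivity, (mul_div_cancel₀ y hm.ne').symm⟩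
  calc (m * s) ^ (q - 1) * (1 - c * (m * s))
      = m ^ (q - 1) * (s ^ (q - 1) * (1 - (q - 1) / q * s)) := by
        rw [mul_rpow hm.le hs, ← mul_assoc c, hcm]; ring
    _ ≤ m ^ (q - 1) * (1 / q) := by
        gcongr
        exact rpow_sub_one_mul_one_sub_le hq.le hs
    _ = m ^ (q - 1) / q := mul_one_div _ _

lemma rpow_sub_one_mul_one_sub_mul_of_eq {q c : ℝ} (hq : 0 < q) (hc : 0 < c) :
    ((q - 1) / (c * q)) ^ (q - 1) * (1 - c * ((q - 1) / (c * q)))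
      = ((q - 1) / (c * q)) ^ (q - 1) / q := by
  rw [show 1 - c * ((q - 1) / (c * q)) = 1 / q by field_simp; ring, mul_one_div]

end Real

lemma integral_Ioo_one_sub_rpow {p x : ℝ} (hp : -1 < p) (hx : x ≤ 1) :
    ∫ t in Ioo x 1, (1 - t) ^ p = (1 - x) ^ (p + 1) / (p + 1) := by
  rw [← integral_Ioc_eq_integral_Ioo, ← intervalIntegral.integral_of_le hx,
    intervalIntegral.integral_comp_sub_left (fun s => s ^ p) 1, sub_self,
    integral_rpow (Or.inl hp), Real.zero_rpow (by linarith), sub_zero]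

lemma mul_rpow_add_inv_mul_integral_one_sub_rpow {p x : ℝ} (hp : -1 < p) (hx : x < 1) :
    x * (1 - x) ^ (p - 1) + (1 - x)⁻¹ * ∫ t in Ioo x 1, (1 - t) ^ p
      = (1 - x) ^ (p - 1) * (1 - p / (p + 1) * (1 - x)) := by
  have hy : 0 < 1 - x := by linarith
  have hsplit : (1 - x) ^ (p + 1) = (1 - x) ^ (p - 1) * (1 - x) ^ 2 := by
    rw [← Real.rpow_natCast, ← Real.rpow_add hy]
    congr 1; push_cast; ring
  have hp1 : p + 1 ≠ 0 := by linarith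
  rw [integral_Ioo_one_sub_rpow hp hx.le, hsplit]
  field_simp
  ring

lemma rpow_div_sq_sub_one_div_self {p : ℝ} (hp : 1 < p) :
    ((p ^ 2 - 1) / p ^ 2) ^ (p - 1) / p = p ^ (1 - 2 * p) * (p ^ 2 - 1) ^ (p - 1) := by
  have hp0 : 0 < p := by linarith
  have hpow : (p ^ 2) ^ (p - 1) * p = (p ^ (1 - 2 * p))⁻¹ := by
    rw [← Real.rpow_natCast, ← Real.rpow_mul hp0.le, ← Real.rpow_add_one hp0.ne',
      ← Real.rpow_neg hp0.le]
    congr 1; push_cast; ring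
  rw [Real.div_rpow (by nlinarith) (by positivity), div_div, hpow]
  field_simp

/-- Example with uniform weights on `(0,1)`:
`δ̄₁ = sup_{x∈(0,1)} [x(1-x)^(p-1) + (1-x)⁻¹∫_x^1 (1-t)^p dt]` satisfies
`δ̄₁^(1/p) = p^(1/p-2)(p²-1)^(1-1/p)`, i.e. `δ̄₁ = p^(1-2p)(p²-1)^(p-1)`. -/
theorem stmt16 (p : ℝ) (hp : 1 < p) :
    IsLUB {r : ℝ | ∃ x ∈ Ioo (0:ℝ) 1,
        r = x * (1 - x) ^ (p - 1) + (1 - x)⁻¹ * ∫ t in Ioo x 1, (1 - t) ^ p}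
      (p ^ (1 - 2 * p) * (p ^ 2 - 1) ^ (p - 1)) := by
  have hp0 : 0 < p := by linarith
  have hc : 0 < p / (p + 1) := by positivity
  have hmaximizer : (p - 1) / (p / (p + 1) * p) = (p ^ 2 - 1) / p ^ 2 := by field_simp; ring
  have hmaximizer_pos : 0 < (p ^ 2 - 1) / p ^ 2 := div_pos (by nlinarith) (by positivity)
  have hmaximizer_lt : (p ^ 2 - 1) / p ^ 2 < 1 := by rw [div_lt_one (by positivity)]; linarith
  rw [← rpow_div_sq_sub_one_div_self hp, ← hmaximizer]
  refine IsGreatest.isLUB ⟨⟨1 - (p - 1) / (p / (p + 1) * p), ⟨?_, ?_⟩, ?_⟩, ?_⟩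
  · rw [hmaximizer]; linarith
  · rw [hmaximizer]; linarith
  · rw [mul_rpow_add_inv_mul_integral_one_sub_rpow (by linarith) (by rw [hmaximizer]; linarith),
      sub_sub_cancel, Real.rpow_sub_one_mul_one_sub_mul_of_eq hp0 hc]
  · rintro r ⟨x, ⟨-, hx1⟩, rfl⟩
    rw [mul_rpow_add_inv_mul_integral_one_sub_rpow (by linarith) hx1]
    exact Real.rpow_sub_one_mul_one_sub_mul_le hp hc (by linarith)
end
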